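/- arXiv:2009.12775 — 2 statements merged into one kernel-verified Lean document; each statement's English description precedes it below -/
import Mathlib

section
/- Let n ≥ 1 and let κ₁ ≤ κ₂ ≤ ... ≤ κₙ be a non-descending finite sequence of measurable cardinals, and let U₁, ..., Uₙ be normal measures over κ₁, ..., κₙ respectively. Let ν be a cardinal with ν < κ₁, let Aᵢ ∈ Uᵢ for each i, and let F : ∏ᵢ₌₁ⁿ Aᵢ → ν be any function on the set of increasing n-tuples from A₁, ..., Aₙ. Then there exist sets Hᵢ ⊆ Aᵢ with Hᵢ ∈ Uᵢ such that F is constant on ∏ᵢ₌₁ⁿ Hᵢ, i.e. the image of F restricted to ∏ᵢ₌₁ⁿ Hᵢ has exactly one element. -/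
open Set

/-- `U` is a normal measure over `κ`: a κ-complete nonprincipal ultrafilter on
the ordinals below `κ` which is closed under diagonal intersections. -/
structure IsNormalMeasure (κ : Ordinal) (U : Set (Set Ordinal)) : Prop where
  sets_subset : ∀ A ∈ U, A ⊆ Set.Iio κ
  univ_mem : Set.Iio κ ∈ U
  empty_not_mem : (∅ : Set Ordinal) ∉ U
  superset_mem : ∀ A ∈ U, ∀ B ⊆ Set.Iio κ, A ⊆ B → B ∈ U
  inter_mem : ∀ A ∈ U, ∀ B ∈ U, A ∩ B ∈ U
  nonprincipal : ∀ α : Ordinal, {α} ∉ U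
  ultra : ∀ A ⊆ Set.Iio κ, A ∈ U ∨ Set.Iio κ \ A ∈ U
  complete : ∀ θ < κ, ∀ s : Ordinal → Set Ordinal,
      (∀ i < θ, s i ∈ U) → {β | β < κ ∧ ∀ i < θ, β ∈ s i} ∈ U
  normal : ∀ s : Ordinal → Set Ordinal, (∀ α < κ, s α ∈ U) →
      {β | β < κ ∧ ∀ α < β, β ∈ s α} ∈ U

/-- The increasing product `∏ᵢ Aᵢ`: the set of strictly increasing `n`-tuples
`x` of ordinals with `x i ∈ A i` for every `i`. -/
def IncProd {n : ℕ} (A : Fin n → Set Ordinal) : Set (Fin n → Ordinal) :=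
  {x | StrictMono x ∧ ∀ i, x i ∈ A i}

/-!
Induction on `n`. Fixing the first coordinate `α`, the induction hypothesis gives sets
`Hᵢ(α) ∈ Uᵢ₊₁` on which `F(α, ·)` takes a constant value `c(α) < ν`. By `κ₁`-completeness
`c` is constant on some `H₀ ∈ U₁`, and the diagonal intersections
`{β | ∀ α < β, β ∈ Hᵢ(α)} ∈ Uᵢ₊₁` give the remaining sets: an increasing tuple
`(α, y)` from these has `y` in the product of the `Hᵢ(α)`, so `F (α, y) = c(α)`.
Completeness also shows that final segments of `κ` are measure one, which together with
monotonicity of the `κᵢ` makes the product of measure-one sets nonempty.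
-/

namespace IsNormalMeasure

variable {κ : Ordinal} {U : Set (Set Ordinal)} (hU : IsNormalMeasure κ U)
include hU

theorem nonempty_of_mem {S : Set Ordinal} (hS : S ∈ U) : S.Nonempty :=
  nonempty_iff_ne_empty.mpr fun h => hU.empty_not_mem (h ▸ hS)

theorem diff_singleton_mem (α : Ordinal) : Iio κ \ {α} ∈ U := by
  by_cases hα : α < κ
  · exact (hU.ultra {α} (singleton_subset_iff.mpr hα)).resolve_left (hU.nonprincipal α)
  · exact hU.superset_mem _ hU.univ_mem _ sdiff_subset fun β hβ =>
      ⟨hβ, fun h => hα ((mem_singleton_iff.mp h) ▸ hβ)⟩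

theorem inter_Ioi_mem {S : Set Ordinal} (hS : S ∈ U) {α : Ordinal} (hα : α < κ) :
    S ∩ Ioi α ∈ U := by
  have hge : {β | β < κ ∧ ∀ i < α, β ∈ Iio κ \ {i}} ∈ U :=
    hU.complete α hα _ fun i _ => hU.diff_singleton_mem i
  refine hU.superset_mem _ (hU.inter_mem _ hS _ (hU.inter_mem _ hge _
    (hU.diff_singleton_mem α))) _ (inter_subset_left.trans (hU.sets_subset S hS))
    fun β ⟨hβS, ⟨_, hβα⟩, _, hne⟩ =>
      ⟨hβS, lt_of_le_of_ne (not_lt.mp fun hlt => (hβα β hlt).2 rfl) fun h => hne h.symm⟩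

theorem exists_lt_fiber_mem {ν : Ordinal} (hν : ν < κ) {B : Set Ordinal} (hB : B ∈ U)
    (f : Ordinal → Ordinal) (hf : ∀ β ∈ B, f β < ν) :
    ∃ c < ν, {β ∈ B | f β = c} ∈ U := by
  suffices ∃ c, {β ∈ B | f β = c} ∈ U by
    obtain ⟨c, hc⟩ := this
    obtain ⟨β, hβB, rfl⟩ := hU.nonempty_of_mem hc
    exact ⟨f β, hf β hβB, hc⟩
  by_contra! hc
  have hcompl : ∀ c, Iio κ \ {β ∈ B | f β = c} ∈ U := fun c =>
    (hU.ultra _ ((sep_subset _ _).trans (hU.sets_subset B hB))).resolve_left (hc c)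
  obtain ⟨β, ⟨_, hβ⟩, hβB⟩ := hU.nonempty_of_mem
    (hU.inter_mem _ (hU.complete ν hν _ fun c _ => hcompl c) _ hB)
  exact (hβ (f β) (hf β hβB)).2 ⟨hβB, rfl⟩

end IsNormalMeasure

theorem incProd_mono {n : ℕ} {A B : Fin n → Set Ordinal} (h : ∀ i, A i ⊆ B i) :
    IncProd A ⊆ IncProd B :=
  fun _ ⟨hx, hxA⟩ => ⟨hx, fun i => h i (hxA i)⟩

theorem cons_mem_incProd_iff {n : ℕ} {A : Fin (n + 1) → Set Ordinal} {α : Ordinal}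
    {y : Fin n → Ordinal} :
    Fin.cons α y ∈ IncProd A ↔ α ∈ A 0 ∧ y ∈ IncProd fun i => A i.succ ∩ Ioi α := by
  simp only [IncProd, mem_ofPred_eq, Fin.strictMono_cons, Fin.forall_fin_succ, Fin.cons_zero,
    Fin.cons_succ, mem_inter_iff, mem_Ioi, forall_and]
  tauto

section Homogeneity

variable {n : ℕ} {κ : Fin n → Ordinal} {U : Fin n → Set (Set Ordinal)}

theorem incProd_nonempty (hmono : Monotone κ) (hU : ∀ i, IsNormalMeasure (κ i) (U i))
    {H : Fin n → Set Ordinal} (hH : ∀ i, H i ∈ U i) : (IncProd H).Nonempty := by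
  induction n with
  | zero => exact ⟨Fin.elim0, fun i => i.elim0, fun i => i.elim0⟩
  | succ n ih =>
    obtain ⟨α, hα⟩ := (hU 0).nonempty_of_mem (hH 0)
    have hακ : α < κ 0 := (hU 0).sets_subset _ (hH 0) hα
    obtain ⟨y, hy⟩ := ih (hmono.comp Fin.strictMono_succ.monotone) (fun i => hU i.succ)
      fun i => (hU i.succ).inter_Ioi_mem (hH i.succ) (hακ.trans_le (hmono (Fin.zero_le _)))
    exact ⟨Fin.cons α y, cons_mem_incProd_iff.mpr ⟨hα, hy⟩⟩

theorem exists_homogeneous_subsets (hmono : Monotone κ)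
    (hU : ∀ i, IsNormalMeasure (κ i) (U i)) {ν : Ordinal} (hν : ∀ i, ν < κ i)
    {A : Fin n → Set Ordinal} (hA : ∀ i, A i ∈ U i) (F : (Fin n → Ordinal) → Ordinal)
    (hF : ∀ x ∈ IncProd A, F x < ν) :
    ∃ H : Fin n → Set Ordinal, (∀ i, H i ⊆ A i ∧ H i ∈ U i) ∧
      ∃ c < ν, ∀ x ∈ IncProd H, F x = c := by
  induction n with
  | zero =>
    have hx : ∀ x ∈ IncProd A, x = Fin.elim0 := fun x _ => Subsingleton.elim _ _
    have h0 : Fin.elim0 ∈ IncProd A := ⟨fun i => i.elim0, fun i => i.elim0⟩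
    exact ⟨A, fun i => i.elim0, F Fin.elim0, hF _ h0, fun x hxA => hx x hxA ▸ rfl⟩
  | succ n ih =>
    have key : ∀ α, ∃ H' : Fin n → Set Ordinal, (∀ i, H' i ∈ U i.succ) ∧
        ∃ c, α ∈ A 0 → c < ν ∧ ∀ y ∈ IncProd H', F (Fin.cons α y) = c := fun α => by
      by_cases hα : α ∈ A 0
      · have hακ : α < κ 0 := (hU 0).sets_subset _ (hA 0) hα
        obtain ⟨H', hH', c, hc, hconst⟩ := ih (hmono.comp Fin.strictMono_succ.monotone)
          (fun i => hU i.succ) (fun i => hν i.succ)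
          (fun i => (hU i.succ).inter_Ioi_mem (hA i.succ) (hακ.trans_le (hmono (Fin.zero_le _))))
          (fun y => F (Fin.cons α y)) fun y hy => hF _ (cons_mem_incProd_iff.mpr ⟨hα, hy⟩)
        exact ⟨H', fun i => (hH' i).2, c, fun _ => ⟨hc, hconst⟩⟩
      · exact ⟨fun i => Iio (κ i.succ), fun i => (hU i.succ).univ_mem, 0, fun h => (hα h).elim⟩
    choose Hf hHf cf hcf using key
    obtain ⟨c, hc, hc0⟩ := (hU 0).exists_lt_fiber_mem (hν 0) (hA 0) cf fun α hα => (hcf α hα).1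
    let D : Fin n → Set Ordinal := fun i => A i.succ ∩ {β | β < κ i.succ ∧ ∀ α < β, β ∈ Hf α i}
    have hD : ∀ i, D i ∈ U i.succ := fun i =>
      (hU i.succ).inter_mem _ (hA i.succ) _ ((hU i.succ).normal _ fun α _ => hHf α i)
    refine ⟨Fin.cons {β ∈ A 0 | cf β = c} D,
      Fin.cases ⟨sep_subset _ _, hc0⟩ fun i => ⟨inter_subset_left, hD i⟩, c, hc, fun x hx => ?_⟩
    rw [← Fin.cons_self_tail x, cons_mem_incProd_iff] at hx
    obtain ⟨⟨hx0A, hx0c⟩, hxD⟩ := hx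
    have hy : Fin.tail x ∈ IncProd (Hf (x 0)) :=
      incProd_mono (fun i _ hβ => hβ.1.2.2 _ hβ.2) hxD
    rw [← Fin.cons_self_tail x, (hcf _ hx0A).2 _ hy, ← hx0c]

end Homogeneity

theorem homogeneous_product_general {n : ℕ} (hn : 0 < n)
    (κ : Fin n → Ordinal) (hmono : Monotone κ)
    (U : Fin n → Set (Set Ordinal)) (hU : ∀ i, IsNormalMeasure (κ i) (U i))
    (ν : Ordinal) (hν : ν < κ ⟨0, hn⟩)
    (A : Fin n → Set Ordinal) (hA : ∀ i, A i ∈ U i)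
    (F : (Fin n → Ordinal) → Ordinal) (hF : ∀ x ∈ IncProd A, F x < ν) :
    ∃ H : Fin n → Set Ordinal,
      (∀ i, H i ⊆ A i ∧ H i ∈ U i) ∧ ∃ c, F '' IncProd H = {c} := by
  have hν' : ∀ i, ν < κ i := fun i =>
    hν.trans_le (hmono (Fin.le_iff_val_le_val.mpr (Nat.zero_le _)))
  obtain ⟨H, hH, c, -, hconst⟩ := exists_homogeneous_subsets hmono hU hν' hA F hF
  have hne : (IncProd H).Nonempty := incProd_nonempty hmono hU fun i => (hH i).2
  exact ⟨H, hH, c, (EqOn.image_eq (f₂ := fun _ => c) hconst).trans (hne.image_const c)⟩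

/-- Lemma (homogeneity): for measurable cardinals `κ₁ ≤ ... ≤ κₙ` with normal
measures `U₁, ..., Uₙ`, sets `Aᵢ ∈ Uᵢ`, a cardinal `ν < κ₁`, and any function
`F : ∏ᵢ Aᵢ → ν`, there are `Hᵢ ⊆ Aᵢ` with `Hᵢ ∈ Uᵢ` such that the image of `F`
restricted to `∏ᵢ Hᵢ` has exactly one element. -/
theorem homogeneous_product {n : ℕ} (hn : 0 < n)
    (κ : Fin n → Ordinal) (hmono : Monotone κ)
    (hcardinal : ∀ i, ((κ i).card).ord = κ i)
    (hmeasurable : ∀ i, Cardinal.aleph0 < (κ i).card)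
    (U : Fin n → Set (Set Ordinal)) (hU : ∀ i, IsNormalMeasure (κ i) (U i))
    (ν : Ordinal) (hνcard : ν.card.ord = ν) (hν : ν < κ ⟨0, hn⟩)
    (A : Fin n → Set Ordinal) (hA : ∀ i, A i ∈ U i)
    (F : (Fin n → Ordinal) → Ordinal) (hF : ∀ x ∈ IncProd A, F x < ν) :
    ∃ H : Fin n → Set Ordinal,
      (∀ i, H i ⊆ A i ∧ H i ∈ U i) ∧ ∃ c, F '' IncProd H = {c} :=
  homogeneous_product_general hn κ hmono U hU ν hν A hA F hF
end

section
/- Let κ be a measurable cardinal and U a normal measure over κ. Then for every sequence ⟨b_β : β < κ⟩ with b_β ⊆ β for each β < κ, there exist a set B ⊆ κ and a set A ∈ U such that for every β ∈ A, B ∩ β = b_β. -/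
open Set

/-- Ineffability: if `κ` is a measurable cardinal and `U` is a normal measure
over `κ`, then for every coherent list `⟨b β ⊆ β : β < κ⟩` there are a set
`B ⊆ κ` and a set `A ∈ U` such that `B ∩ β = b β` for every `β ∈ A`. -/
theorem normal_measure_ineffable (κ : Ordinal)
    (hcardinal : (κ.card).ord = κ) (hmeasurable : Cardinal.aleph0 < κ.card)
    (U : Set (Set Ordinal)) (hU : IsNormalMeasure κ U)
    (b : Ordinal → Set Ordinal) (hb : ∀ β < κ, b β ⊆ Set.Iio β) :
    ∃ B ⊆ Set.Iio κ, ∃ A ∈ U, ∀ β ∈ A, B ∩ Set.Iio β = b β := by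
  classical
  set S : Ordinal → Set Ordinal := fun α => {β | β < κ ∧ α ∈ b β} with hS
  have hSsub : ∀ α, S α ⊆ Set.Iio κ := fun α β hβ => hβ.1
  set B : Set Ordinal := {α | α < κ ∧ S α ∈ U} with hB
  refine ⟨B, fun α hα => hα.1, ?_⟩
  set s : Ordinal → Set Ordinal := fun α =>
    if S α ∈ U then S α else Set.Iio κ \ S α with hs
  have hsU : ∀ α < κ, s α ∈ U := by
    intro α hα
    by_cases h : S α ∈ U
    · simpa [hs, h] using h
    · rcases hU.ultra (S α) (hSsub α) with h' | h'
      · exact absurd h' h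
      · simpa [hs, h] using h'
  refine ⟨_, hU.normal s hsU, ?_⟩
  rintro β ⟨hβκ, hβ⟩
  ext α
  constructor
  · rintro ⟨⟨hακ, hSα⟩, hαβ⟩
    have := hβ α hαβ
    simp only [hs] at this
    simp only [hSα, if_pos] at this
    exact this.2
  · intro hαb
    have hαβ : α < β := hb β hβκ hαb
    have hακ : α < κ := hαβ.trans hβκ
    have := hβ α hαβ
    simp only [hs] at this
    by_cases h : S α ∈ U
    · exact ⟨⟨hακ, h⟩, hαβ⟩
    · rw [if_neg h] at this
      exact absurd (show β ∈ S α from ⟨hβκ, hαb⟩) this.2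
end
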